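/- Let $V$ be a real inner product space and let $\gamma_1,\ldots,\gamma_k \in V$ ($k\ge1$) be nonzero and pairwise orthogonal. For a nonzero $\gamma \in V$ let $r_\gamma$ denote the orthogonal reflection $r_\gamma(v)=v-\frac{2\langle \gamma,v\rangle}{\langle\gamma,\gamma\rangle}\gamma$. Then for every $v\in V$: $\langle v,\ (r_{\gamma_2}\circ\cdots\circ r_{\gamma_k})(v)\rangle - \langle v,\ (r_{\gamma_1}\circ r_{\gamma_2}\circ\cdots\circ r_{\gamma_k})(v)\rangle = \frac{2\langle\gamma_1,v\rangle^2}{\langle\gamma_1,\gamma_1\rangle}$ (where for $k=1$ the composition $r_{\gamma_2}\circ\cdots\circ r_{\gamma_k}$ is the identity). (The key computation in the proof of Lemma 2.3.) -/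

import Mathlib

open scoped RealInnerProductSpace

noncomputable section

variable {V : Type*} [NormedAddCommGroup V] [InnerProductSpace ℝ V]

/-- The orthogonal reflection in the hyperplane orthogonal to `γ`:
`r_γ(v) = v - (2⟨γ,v⟩/⟨γ,γ⟩) γ`. -/
def reflect (γ : V) (v : V) : V := v - (2 * ⟪γ, v⟫ / ⟪γ, γ⟫) • γ

/-- The composition `r_{l₁} ∘ r_{l₂} ∘ ⋯ ∘ r_{lₙ}` of the reflections in the
entries of a list `l = [l₁, …, lₙ]` (the identity for the empty list). -/
def compReflect (l : List V) : V → V := l.foldr (fun γ f => reflect γ ∘ f) id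

theorem compReflect_cons (γ : V) (l : List V) (v : V) :
    compReflect (γ :: l) v = reflect γ (compReflect l v) := rfl

theorem inner_reflect_right (γ u w : V) :
    ⟪u, reflect γ w⟫ = ⟪u, w⟫ - 2 * ⟪γ, w⟫ * ⟪γ, u⟫ / ⟪γ, γ⟫ := by
  rw [reflect, inner_sub_right, real_inner_smul_right, real_inner_comm u γ]
  ring

theorem inner_reflect_right_of_inner_eq_zero {γ u : V} (h : ⟪u, γ⟫ = 0) (w : V) :
    ⟪u, reflect γ w⟫ = ⟪u, w⟫ := by
  rw [inner_reflect_right, real_inner_comm u γ, h, mul_zero, zero_div, sub_zero]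

theorem inner_compReflect_right_of_forall_inner_eq_zero {u : V} {l : List V}
    (h : ∀ x ∈ l, ⟪u, x⟫ = 0) (w : V) : ⟪u, compReflect l w⟫ = ⟪u, w⟫ := by
  induction l with
  | nil => rfl
  | cons γ l ih =>
    rw [compReflect_cons, inner_reflect_right_of_inner_eq_zero (h γ List.mem_cons_self)]
    exact ih fun x hx => h x (List.mem_cons_of_mem γ hx)

theorem inner_compReflect_sub_inner_compReflect_cons {γ : V} {l : List V}
    (h : ∀ x ∈ l, ⟪γ, x⟫ = 0) (v : V) :
    ⟪v, compReflect l v⟫ - ⟪v, compReflect (γ :: l) v⟫ = 2 * ⟪γ, v⟫ ^ 2 / ⟪γ, γ⟫ := by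
  rw [compReflect_cons, inner_reflect_right, inner_compReflect_right_of_forall_inner_eq_zero h]
  ring

theorem stmt_14_general (k : ℕ) (hk : 0 < k) (γ : Fin k → V)
    (horth : ∀ i j, i ≠ j → ⟪γ i, γ j⟫ = 0) (v : V) :
    ⟪v, compReflect (List.ofFn γ).tail v⟫ - ⟪v, compReflect (List.ofFn γ) v⟫
      = 2 * ⟪γ ⟨0, hk⟩, v⟫ ^ 2 / ⟪γ ⟨0, hk⟩, γ ⟨0, hk⟩⟫ := by
  obtain ⟨n, rfl⟩ : ∃ n, k = n + 1 := ⟨k - 1, by omega⟩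
  rw [List.ofFn_succ, List.tail_cons]
  apply inner_compReflect_sub_inner_compReflect_cons
  rintro x hx
  obtain ⟨i, rfl⟩ := List.mem_ofFn.mp hx
  exact horth _ _ (Fin.succ_ne_zero i).symm

/-- The key computation in the proof of Lemma 2.3: for nonzero pairwise orthogonal
`γ₁, …, γₖ` and any `v`,
`⟨v, r_{γ₂}⋯r_{γₖ} v⟩ - ⟨v, r_{γ₁}r_{γ₂}⋯r_{γₖ} v⟩ = 2⟨γ₁,v⟩²/⟨γ₁,γ₁⟩`. -/
theorem stmt_14 (k : ℕ) (hk : 0 < k) (γ : Fin k → V)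
    (hne : ∀ i, γ i ≠ 0)
    (horth : ∀ i j, i ≠ j → ⟪γ i, γ j⟫ = 0) (v : V) :
    ⟪v, compReflect (List.ofFn γ).tail v⟫ - ⟪v, compReflect (List.ofFn γ) v⟫
      = 2 * ⟪γ ⟨0, hk⟩, v⟫ ^ 2 / ⟪γ ⟨0, hk⟩, γ ⟨0, hk⟩⟫ :=
  stmt_14_general k hk γ horth v
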